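/- arXiv:2509.16954 — 4 statements merged into one kernel-verified Lean document; each statement's English description precedes it below -/
import Mathlib

section
/- Let a, c₁, c₂, M > 0 and β > 0, and let ξ* be the unique positive real number satisfying c₁·(ξ*)^{1+β} − c₂·ξ* − M = 0. Let θ : ℝ → ℝ be differentiable on [0,∞) with θ(z) ≥ 0 for all z ≥ 0, and suppose that a·θ'(z) + c₁·θ(z)^{1+β} − c₂·θ(z) ≤ M for all z ≥ 0. Then limsup_{z→∞} θ(z) ≤ ξ*. -/
open Filter Real

private lemma F_pos_of_gt {c₁ c₂ M β ξs : ℝ}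
    (hc₁ : 0 < c₁) (hc₂ : 0 < c₂) (hM : 0 < M) (hβ : 0 < β) (hξs_pos : 0 < ξs)
    (hξs_uniq : ∀ ξ : ℝ, 0 < ξ → c₁ * ξ ^ (1 + β) - c₂ * ξ - M = 0 → ξ = ξs) :
    ∀ s : ℝ, ξs < s → 0 < c₁ * s ^ (1 + β) - c₂ * s - M := by
  intro s hs
  by_contra hcon
  push_neg at hcon
  set b : ℝ := max s (max 2 (((c₂ + M) / c₁) ^ β⁻¹)) with hb
  have hsb : s ≤ b := le_max_left _ _
  have hb2 : (2 : ℝ) ≤ b := le_trans (le_max_left _ _) (le_max_right _ _)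
  have hbpos : 0 < b := by linarith
  have hx0 : (0 : ℝ) ≤ (c₂ + M) / c₁ := by positivity
  have hbx : ((c₂ + M) / c₁) ^ β⁻¹ ≤ b := le_trans (le_max_right _ _) (le_max_right _ _)
  have hbβ : (c₂ + M) / c₁ ≤ b ^ β := by
    calc (c₂ + M) / c₁ = (((c₂ + M) / c₁) ^ β⁻¹) ^ β := (Real.rpow_inv_rpow hx0 hβ.ne').symm
    _ ≤ b ^ β := Real.rpow_le_rpow (Real.rpow_nonneg hx0 _) hbx hβ.le
  have hc₁bβ : c₂ + M ≤ c₁ * b ^ β := by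
    rw [div_le_iff₀ hc₁] at hbβ; linarith [hbβ]
  have hbsplit : b ^ (1 + β) = b * b ^ β := by
    rw [Real.rpow_add hbpos, Real.rpow_one]
  have hFb : 0 < c₁ * b ^ (1 + β) - c₂ * b - M := by
    rw [hbsplit]
    nlinarith [mul_le_mul_of_nonneg_left hc₁bβ hbpos.le]
  -- continuity of F on [s, b]
  have hspos : 0 < s := hξs_pos.trans hs
  have hcont : ContinuousOn (fun x : ℝ => c₁ * x ^ (1 + β) - c₂ * x - M) (Set.Icc s b) := by
    intro x hx
    have hx0 : (0 : ℝ) < x := lt_of_lt_of_le hspos hx.1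
    exact ContinuousAt.continuousWithinAt
      (((continuousAt_const.mul (Real.continuousAt_rpow_const x (1 + β) (Or.inl hx0.ne'))).sub
        (continuousAt_const.mul continuousAt_id)).sub continuousAt_const)
  have hmem : (0 : ℝ) ∈ Set.Icc (c₁ * s ^ (1 + β) - c₂ * s - M) (c₁ * b ^ (1 + β) - c₂ * b - M) :=
    ⟨hcon, hFb.le⟩
  obtain ⟨c, hcmem, hc⟩ := intermediate_value_Icc hsb hcont hmem
  have hcpos : 0 < c := lt_of_lt_of_le hspos hcmem.1
  have h1 : c = ξs := hξs_uniq c hcpos (by simpa using hc)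
  have h2 : ξs < c := lt_of_lt_of_le hs hcmem.1
  linarith

/-- If `θ ≥ 0` is differentiable on `[0,∞)` and satisfies the differential
inequality `a θ' + c₁ θ^{1+β} - c₂ θ ≤ M`, and `ξ*` is the unique positive root of
`c₁ ξ^{1+β} - c₂ ξ - M = 0`, then `limsup_{z→∞} θ(z) ≤ ξ*`. -/
theorem limsup_le_of_diff_ineq (a c₁ c₂ M β ξs : ℝ)
    (ha : 0 < a) (hc₁ : 0 < c₁) (hc₂ : 0 < c₂) (hM : 0 < M) (hβ : 0 < β)
    (hξs_pos : 0 < ξs)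
    (hξs_root : c₁ * ξs ^ (1 + β) - c₂ * ξs - M = 0)
    (hξs_uniq : ∀ ξ : ℝ, 0 < ξ → c₁ * ξ ^ (1 + β) - c₂ * ξ - M = 0 → ξ = ξs)
    (θ : ℝ → ℝ)
    (hθ_diff : ∀ z ∈ Set.Ici (0 : ℝ), DifferentiableAt ℝ θ z)
    (hθ_nonneg : ∀ z ≥ (0 : ℝ), 0 ≤ θ z)
    (hθ_ineq : ∀ z ≥ (0 : ℝ), a * deriv θ z + c₁ * θ z ^ (1 + β) - c₂ * θ z ≤ M) :
    Filter.limsup θ Filter.atTop ≤ ξs := by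
  have hFpos : ∀ s : ℝ, ξs < s → 0 < c₁ * s ^ (1 + β) - c₂ * s - M :=
    F_pos_of_gt hc₁ hc₂ hM hβ hξs_pos hξs_uniq
  have hFnn : ∀ s : ℝ, ξs ≤ s → 0 ≤ c₁ * s ^ (1 + β) - c₂ * s - M := by
    intro s hs
    rcases hs.eq_or_lt with h | h
    · rw [← h]; linarith [hξs_root]
    · exact (hFpos s h).le
  have hderiv_le : ∀ z ≥ (0 : ℝ), ξs ≤ θ z → deriv θ z ≤ 0 := by
    intro z hz hθz
    have h1 := hθ_ineq z hz
    have h2 := hFnn (θ z) hθz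
    nlinarith
  have key : ∀ ε > (0 : ℝ), ∀ᶠ z in atTop, θ z ≤ ξs + ε := by
    intro ε hε
    -- Step (a): existence of z₀ with θ z₀ ≤ ξs + ε
    have hex : ∃ z₀ ≥ (0 : ℝ), θ z₀ ≤ ξs + ε := by
      by_contra hno
      push_neg at hno
      have hθgt : ∀ z ≥ (0 : ℝ), ξs + ε < θ z := hno
      have hanti : AntitoneOn θ (Set.Ici 0) := by
        apply antitoneOn_of_deriv_nonpos (convex_Ici 0)
        · exact fun z hz => (hθ_diff z hz).continuousAt.continuousWithinAt
        · rw [interior_Ici]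
          exact fun z hz => (hθ_diff z (Set.mem_Ici.mpr (le_of_lt hz))).differentiableWithinAt
        · rw [interior_Ici]
          intro z hz
          exact hderiv_le z hz.le (by linarith [hθgt z hz.le])
      have hθ0gt : ξs + ε < θ 0 := hθgt 0 le_rfl
      -- minimum of F on [ξs+ε, θ 0]
      have hKne : (Set.Icc (ξs + ε) (θ 0)).Nonempty := ⟨ξs + ε, le_refl _, hθ0gt.le⟩
      have hcontF : ContinuousOn (fun s : ℝ => c₁ * s ^ (1 + β) - c₂ * s - M)
          (Set.Icc (ξs + ε) (θ 0)) := by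
        intro x hx
        have hx0 : (0 : ℝ) < x := lt_of_lt_of_le (by linarith) hx.1
        exact ContinuousAt.continuousWithinAt
          (((continuousAt_const.mul (Real.continuousAt_rpow_const x (1 + β) (Or.inl hx0.ne'))).sub
            (continuousAt_const.mul continuousAt_id)).sub continuousAt_const)
      obtain ⟨smin, hsmin_mem, hsmin'⟩ := isCompact_Icc.exists_isMinOn hKne hcontF
      have hsmin : ∀ s ∈ Set.Icc (ξs + ε) (θ 0),
          c₁ * smin ^ (1 + β) - c₂ * smin - M ≤ c₁ * s ^ (1 + β) - c₂ * s - M :=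
        fun s hs => hsmin' hs
      set δ : ℝ := c₁ * smin ^ (1 + β) - c₂ * smin - M with hδdef
      have hδ : 0 < δ := hFpos smin (by linarith [hsmin_mem.1])
      clear_value δ
      have hdθ : ∀ z ≥ (0 : ℝ), deriv θ z ≤ -(δ / a) := by
        intro z hz
        have h1 := hθ_ineq z hz
        have hmem : θ z ∈ Set.Icc (ξs + ε) (θ 0) :=
          ⟨(hθgt z hz).le, hanti (Set.self_mem_Ici) hz hz⟩
        have h2 := hsmin (θ z) hmem
        have h3 : a * deriv θ z ≤ -δ := by simp only [hδdef]; nlinarith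
        rw [show -(δ / a) = -δ / a by ring, le_div_iff₀ ha]
        nlinarith
      -- φ z = θ z + (δ/a) z is antitone, forcing θ negative eventually
      have hφanti : AntitoneOn (fun z => θ z + (δ / a) * z) (Set.Ici 0) := by
        apply antitoneOn_of_deriv_nonpos (convex_Ici 0)
        · intro z hz
          exact ((hθ_diff z hz).continuousAt.add
            (continuousAt_const.mul continuousAt_id)).continuousWithinAt
        · rw [interior_Ici]
          intro z hz
          exact ((hθ_diff z (Set.mem_Ici.mpr (le_of_lt hz))).add
            ((differentiable_id.const_mul _) z)).differentiableWithinAt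
        · rw [interior_Ici]
          intro z hz
          have hd : HasDerivAt (fun z => θ z + (δ / a) * z) (deriv θ z + (δ / a) * 1) z :=
            (hθ_diff z (Set.mem_Ici.mpr (le_of_lt hz))).hasDerivAt.add ((hasDerivAt_id z).const_mul (δ / a))
          rw [hd.deriv, mul_one]
          have := hdθ z (le_of_lt hz)
          linarith
      set zstar : ℝ := a * (θ 0 + 1) / δ with hzs
      clear_value zstar
      have hθ0 : 0 ≤ θ 0 := hθ_nonneg 0 le_rfl
      have hzstar : 0 ≤ zstar := by rw [hzs]; positivity
      have h4 : θ zstar + (δ / a) * zstar ≤ θ 0 + (δ / a) * 0 :=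
        hφanti Set.self_mem_Ici hzstar hzstar
      have h5 : (δ / a) * zstar = θ 0 + 1 := by
        rw [hzs]
        field_simp
      have h6 := hθ_nonneg zstar hzstar
      rw [h5] at h4
      linarith
    -- Step (b): persistence
    obtain ⟨z₀, hz₀, hθz₀⟩ := hex
    rw [eventually_atTop]
    refine ⟨z₀, fun z₁ hz₁ => ?_⟩
    by_contra hgt
    push_neg at hgt
    set S : Set ℝ := {z | z ∈ Set.Icc z₀ z₁ ∧ θ z ≤ ξs + ε} with hSdef
    have hz₀S : z₀ ∈ S := ⟨⟨le_rfl, hz₁⟩, hθz₀⟩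
    have hSne : S.Nonempty := ⟨z₀, hz₀S⟩
    have hSbdd : BddAbove S := ⟨z₁, fun z hz => hz.1.2⟩
    set w : ℝ := sSup S with hwdef
    have hz₀w : z₀ ≤ w := le_csSup hSbdd hz₀S
    have hwz₁ : w ≤ z₁ := csSup_le hSne (fun z hz => hz.1.2)
    have hw0 : (0 : ℝ) ≤ w := le_trans hz₀ hz₀w
    have hθw : θ w ≤ ξs + ε := by
      have hwcl : w ∈ closure S := csSup_mem_closure hSne hSbdd
      have hne : (nhdsWithin w S).NeBot := mem_closure_iff_nhdsWithin_neBot.mp hwcl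
      have htd : Tendsto θ (nhdsWithin w S) (nhds (θ w)) :=
        ((hθ_diff w hw0).continuousAt).continuousWithinAt
      exact le_of_tendsto htd (eventually_nhdsWithin_of_forall (fun z hz => hz.2))
    have hwlt : w < z₁ := lt_of_le_of_ne hwz₁ (fun h => by rw [h] at hθw; linarith)
    have hgt2 : ∀ z ∈ Set.Ioc w z₁, ξs + ε < θ z := by
      intro z hz
      by_contra hle
      push_neg at hle
      have : z ∈ S := ⟨⟨le_trans hz₀w hz.1.le, hz.2⟩, hle⟩
      exact absurd (le_csSup hSbdd this) (not_le.mpr hz.1)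
    have hanti2 : AntitoneOn θ (Set.Icc w z₁) := by
      apply antitoneOn_of_deriv_nonpos (convex_Icc w z₁)
      · intro z hz
        exact (hθ_diff z (le_trans hw0 hz.1)).continuousAt.continuousWithinAt
      · rw [interior_Icc]
        intro z hz
        exact (hθ_diff z (le_trans hw0 hz.1.le)).differentiableWithinAt
      · rw [interior_Icc]
        intro z hz
        have hzge : (0 : ℝ) ≤ z := le_trans hw0 hz.1.le
        have := hgt2 z ⟨hz.1, hz.2.le⟩
        exact hderiv_le z hzge (by linarith)
    have := hanti2 (Set.left_mem_Icc.mpr hwz₁) (Set.right_mem_Icc.mpr hwz₁) hwz₁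
    linarith
  -- conclude
  have hcb : IsCoboundedUnder (· ≤ ·) atTop θ :=
    isCoboundedUnder_le_of_eventually_le atTop
      (x := (0 : ℝ)) (eventually_atTop.mpr ⟨0, hθ_nonneg⟩)
  refine le_of_forall_pos_le_add (fun ε hε => ?_)
  exact limsup_le_of_le hcb (key ε hε)
end

section
/- Let q₀ > 0, B ≥ 0 and μ ≥ B²/q₀ with μ > 0. Let q̃ : ℝ² → ℝ, c : ℝ² → ℝ and b : ℝ² → ℝ² be C^∞ with q̃(x) ≥ q₀, c(x) ≥ 0 and |b(x)| ≤ B for all x ∈ ℝ². Let T > 0 and let w : ℝ × ℝ² → ℝ be C^∞ and compactly supported in space on [0,T]. Define g(t,x) := ∂ₜw(t,x) − ∇·(q̃(x)∇w(t,x)) + ∇·(b(x)·w(t,x)) + c(x)·w(t,x) + μ·w(t,x). Then for all t ∈ [0,T]: ∫_{ℝ²} w(t,x)² dx ≤ e^{−μt/2}·∫_{ℝ²} w(0,x)² dx + (1/μ)·∫₀ᵗ e^{μ(s−t)/2}·(∫_{ℝ²} g(s,x)² dx) ds. -/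
noncomputable section
open MeasureTheory Real

/-- Divergence of a vector field on ℝ². -/
def vdiv (b : EuclideanSpace ℝ (Fin 2) → EuclideanSpace ℝ (Fin 2))
    (x : EuclideanSpace ℝ (Fin 2)) : ℝ :=
  ∑ i : Fin 2, fderiv ℝ b x (EuclideanSpace.single i 1) i

open scoped ContDiff

abbrev E2 := EuclideanSpace ℝ (Fin 2)

lemma one_le_infty : (1 : WithTop ℕ∞) ≤ ∞ := by exact_mod_cast le_top

lemma infty_add_one_le : (∞ : WithTop ℕ∞) + 1 ≤ ∞ := by exact_mod_cast le_top

lemma vdiv_zero_of_locally_zero {F : E2 → E2} {x : E2} {U : Set E2} (hU : IsOpen U)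
    (hx : x ∈ U) (h0 : ∀ y ∈ U, F y = 0) : vdiv F x = 0 := by
  have h : F =ᶠ[nhds x] (fun _ => (0 : E2)) :=
    Filter.eventuallyEq_of_mem (hU.mem_nhds hx) h0
  unfold vdiv
  rw [h.fderiv_eq]
  simp [fderiv_const]

lemma continuous_vdiv {F : E2 → E2} (hF : ContDiff ℝ ∞ F) : Continuous (vdiv F) := by
  unfold vdiv
  refine continuous_finset_sum _ (fun i _ => ?_)
  have h1 : Continuous fun x => fderiv ℝ F x := hF.continuous_fderiv (by simp)
  have h2 : Continuous fun x => fderiv ℝ F x (EuclideanSpace.single i 1) :=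
    (ContinuousLinearMap.apply ℝ E2 (EuclideanSpace.single i 1)).continuous.comp h1
  exact (continuous_apply i).comp (Continuous.comp (PiLp.continuous_ofLp (p := 2) (β := fun _ : Fin 2 => ℝ)) h2)

lemma integral_vdiv_eq_zero (F : E2 → E2) (hF : ContDiff ℝ ∞ F)
    {K : Set E2} (hK : IsCompact K) (h0 : ∀ x ∉ K, F x = 0) :
    ∫ x, vdiv F x = 0 := by
  classical
  set eL : E2 ≃L[ℝ] (Fin 2 → ℝ) := EuclideanSpace.equiv (Fin 2) ℝ with heL
  -- vdiv vanishes off K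
  have hvd0 : ∀ x ∉ K, vdiv F x = 0 := fun x hx =>
    vdiv_zero_of_locally_zero hK.isClosed.isOpen_compl hx (fun y hy => h0 y hy)
  -- bound on image of K
  obtain ⟨r, hr⟩ : ∃ r : ℝ, (⇑eL '' K) ⊆ Metric.closedBall 0 r :=
    (hK.image eL.continuous).isBounded.subset_closedBall 0
  set M : ℝ := max r 0 with hM
  set a : Fin 2 → ℝ := fun _ => -(M+1) with ha
  set b : Fin 2 → ℝ := fun _ => (M+1) with hb
  have hab : a ≤ b := fun i => by
    simp only [ha, hb]
    have : (0:ℝ) ≤ M := le_max_right r 0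
    linarith
  have hnotK : ∀ y : Fin 2 → ℝ, (M < ‖y‖) → eL.symm y ∉ K := by
    intro y hy hmem
    have : y ∈ ⇑eL '' K := ⟨eL.symm y, hmem, eL.apply_symm_apply y⟩
    have := hr this
    simp only [Metric.mem_closedBall, dist_zero_right] at this
    have : ‖y‖ ≤ M := le_trans this (le_max_left r 0)
    linarith
  set f : (Fin 2 → ℝ) → (Fin 2 → ℝ) := fun y => eL (F (eL.symm y)) with hf
  set f' : (Fin 2 → ℝ) → (Fin 2 → ℝ) →L[ℝ] (Fin 2 → ℝ) := fun y =>
    ((eL : E2 →L[ℝ] (Fin 2 → ℝ)).comp (fderiv ℝ F (eL.symm y))).comp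
      (eL.symm : (Fin 2 → ℝ) →L[ℝ] E2) with hf'
  have hdiveq : ∀ y : Fin 2 → ℝ, (∑ i, f' y (Pi.single i 1) i) = vdiv F (eL.symm y) := by
    intro y
    unfold vdiv
    refine Finset.sum_congr rfl (fun i _ => ?_)
    have h1 : (eL.symm : (Fin 2 → ℝ) →L[ℝ] E2) (Pi.single i 1) = EuclideanSpace.single i 1 := rfl
    simp only [hf', ContinuousLinearMap.comp_apply, h1]
    rfl
  have key := MeasureTheory.integral_divergence_of_hasFDerivAt_off_countable
    a b hab f f' ∅ Set.countable_empty
    (by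
      apply Continuous.continuousOn
      exact eL.continuous.comp (hF.continuous.comp eL.symm.continuous))
    (by
      intro x _
      have h1 : HasFDerivAt F (fderiv ℝ F (eL.symm x)) (eL.symm x) :=
        (hF.differentiable (by simp) (eL.symm x)).hasFDerivAt
      have h2 : HasFDerivAt (fun y => F (eL.symm y))
          ((fderiv ℝ F (eL.symm x)).comp (eL.symm : (Fin 2 → ℝ) →L[ℝ] E2)) x :=
        h1.comp x eL.symm.hasFDerivAt
      have h3 := (eL.hasFDerivAt.comp x h2)
      simpa [hf', ContinuousLinearMap.comp_assoc] using h3)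
    (by
      rw [MeasureTheory.integrableOn_congr_fun (fun y _ => hdiveq y) measurableSet_Icc]
      exact ((continuous_vdiv hF).comp eL.symm.continuous).continuousOn.integrableOn_compact
        isCompact_Icc)
  have hM0 : (0:ℝ) ≤ M := le_max_right r 0
  -- boundary terms vanish
  have hface : ∀ (i : Fin 2) (cc : ℝ), |cc| = M + 1 →
      ∀ x : Fin 1 → ℝ, f (Fin.insertNth (α := fun _ => ℝ) i cc x) i = 0 := by
    intro i cc hcc x
    have hnorm : M < ‖Fin.insertNth (α := fun _ => ℝ) i cc x‖ := by
      have h1 : |cc| ≤ ‖Fin.insertNth (α := fun _ => ℝ) i cc x‖ := by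
        have := norm_le_pi_norm (Fin.insertNth (α := fun _ => ℝ) i cc x) i
        simpa [Fin.insertNth_apply_same] using this
      rw [hcc] at h1; linarith
    have : F (eL.symm (Fin.insertNth (α := fun _ => ℝ) i cc x)) = 0 := h0 _ (hnotK _ hnorm)
    simp [hf, this]
  have hz : ∀ i : Fin 2, ((∫ x in Set.Icc (a ∘ i.succAbove) (b ∘ i.succAbove),
        f (i.insertNth (b i) x) i) -
      ∫ x in Set.Icc (a ∘ i.succAbove) (b ∘ i.succAbove), f (i.insertNth (a i) x) i) = 0 := by
    intro i
    have h1 : ∀ x : Fin 1 → ℝ, f (Fin.insertNth (α := fun _ => ℝ) i (b i) x) i = 0 :=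
      hface i (b i) (by simp only [hb]; rw [abs_of_nonneg] <;> linarith)
    have h2 : ∀ x : Fin 1 → ℝ, f (Fin.insertNth (α := fun _ => ℝ) i (a i) x) i = 0 :=
      hface i (a i) (by simp only [ha]; rw [abs_neg, abs_of_nonneg] <;> linarith)
    simp only [h1, h2, integral_zero, sub_zero]
  rw [Finset.sum_eq_zero (fun i _ => hz i)] at key
  -- extend the set integral to the whole space
  have key2 : (∫ y : Fin 2 → ℝ, vdiv F (eL.symm y)) = 0 := by
    rw [← MeasureTheory.setIntegral_eq_integral_of_forall_compl_eq_zero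
      (s := Set.Icc a b) (f := fun y => vdiv F (eL.symm y)) ?_]
    · rw [← key]
      exact MeasureTheory.setIntegral_congr_fun measurableSet_Icc (fun y _ => (hdiveq y).symm)
    · intro y hy
      apply hvd0
      apply hnotK
      rw [Set.mem_Icc] at hy
      have hny := norm_le_pi_norm y
      rcases not_and_or.mp hy with h | h
      · rw [Pi.le_def] at h; push_neg at h
        obtain ⟨i, hi⟩ := h
        simp only [ha] at hi
        have h2 := hny i
        have h3 := neg_abs_le (y i)
        simp only [Real.norm_eq_abs] at h2
        linarith
      · rw [Pi.le_def] at h; push_neg at h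
        obtain ⟨i, hi⟩ := h
        simp only [hb] at hi
        have h2 := hny i
        have h3 := le_abs_self (y i)
        simp only [Real.norm_eq_abs] at h2
        linarith
  -- change of variables
  have hcv := (EuclideanSpace.volume_preserving_symm_measurableEquiv_toLp (Fin 2)).symm.integral_comp
    (MeasurableEquiv.measurableEmbedding _) (vdiv F)
  rw [← hcv]
  rw [← key2]
  rfl

lemma vdiv_smul {α : E2 → ℝ} {V : E2 → E2} {x : E2}
    (hα : DifferentiableAt ℝ α x) (hV : DifferentiableAt ℝ V x) :
    vdiv (fun y => α y • V y) x =
      (∑ i : Fin 2, fderiv ℝ α x (EuclideanSpace.single i 1) * V x i) + α x * vdiv V x := by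
  have h : fderiv ℝ (fun y => α y • V y) x = _ := (hα.hasFDerivAt.smul hV.hasFDerivAt).fderiv
  unfold vdiv
  rw [h]
  have hpt : ∀ i : Fin 2, (α x • fderiv ℝ V x + (fderiv ℝ α x).smulRight (V x))
      (EuclideanSpace.single i 1) i
      = fderiv ℝ α x (EuclideanSpace.single i 1) * V x i
        + α x * fderiv ℝ V x (EuclideanSpace.single i 1) i := by
    intro i
    simp only [ContinuousLinearMap.add_apply, ContinuousLinearMap.smul_apply,
      ContinuousLinearMap.smulRight_apply, PiLp.add_apply, PiLp.smul_apply, smul_eq_mul]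
    ring
  rw [Finset.sum_congr rfl (fun i _ => hpt i), Finset.sum_add_distrib, Finset.mul_sum]

lemma gradient_apply_coord {a : E2 → ℝ} {x : E2} (ha : DifferentiableAt ℝ a x) (i : Fin 2) :
    gradient a x i = fderiv ℝ a x (EuclideanSpace.single i 1) := by
  have h : (inner ℝ (gradient a x) (EuclideanSpace.single i (1:ℝ)) : ℝ)
      = fderiv ℝ a x (EuclideanSpace.single i 1) := by
    rw [gradient]
    exact InnerProductSpace.toDual_symm_apply
  rw [← h, EuclideanSpace.inner_single_right]
  simp

lemma fderiv_zero_off_compact {f : E2 → ℝ} {K : Set E2} (hK : IsCompact K)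
    (h0 : ∀ y ∉ K, f y = 0) {x : E2} (hx : x ∉ K) :
    fderiv ℝ f x = 0 := by
  have h : f =ᶠ[nhds x] (fun _ => (0:ℝ)) :=
    Filter.eventuallyEq_of_mem (hK.isClosed.isOpen_compl.mem_nhds hx) h0
  rw [h.fderiv_eq]
  exact fderiv_const_apply 0

lemma contDiff_parametric_fderiv (V : ℝ × E2 → E2) (hV : ContDiff ℝ ∞ V) :
    ContDiff ℝ ∞ fun p : ℝ × E2 => fderiv ℝ (fun y => V (p.1, y)) p.2 :=
  ContDiff.fderiv (f := fun (p : ℝ × E2) (y : E2) => V (p.1, y)) (g := fun p => p.2)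
    (hV.comp ((contDiff_fst.fst).prodMk contDiff_snd)) contDiff_snd infty_add_one_le

lemma continuous_parametric_vdiv (V : ℝ × E2 → E2) (hV : ContDiff ℝ ∞ V) :
    Continuous fun p : ℝ × E2 => vdiv (fun y => V (p.1, y)) p.2 := by
  have h := (contDiff_parametric_fderiv V hV).continuous
  unfold vdiv
  refine continuous_finset_sum _ (fun i _ => ?_)
  exact (continuous_apply i).comp
    (Continuous.comp (PiLp.continuous_ofLp (p := 2) (β := fun _ : Fin 2 => ℝ)) ((ContinuousLinearMap.apply ℝ E2 (EuclideanSpace.single i 1)).continuous.comp h))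

lemma contDiff_parametric_gradient (Wf : ℝ × E2 → ℝ) (hW : ContDiff ℝ ∞ Wf) :
    ContDiff ℝ ∞ fun p : ℝ × E2 => gradient (fun z => Wf (p.1, z)) p.2 := by
  have h : ContDiff ℝ ∞ fun p : ℝ × E2 => fderiv ℝ (fun z => Wf (p.1, z)) p.2 :=
    ContDiff.fderiv (f := fun (p : ℝ × E2) (y : E2) => Wf (p.1, y)) (g := fun p => p.2)
      (hW.comp ((contDiff_fst.fst).prodMk contDiff_snd)) contDiff_snd infty_add_one_le
  have h2 := ((InnerProductSpace.toDual ℝ E2).symm.contDiff).comp h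
  exact h2

lemma hasDerivAt_integral_sq (W : ℝ × E2 → ℝ) (hW : ContDiff ℝ ∞ W) (R' : ℝ)
    (hsupp : ∀ t x, x ∉ Metric.closedBall (0:E2) R' → W (t,x) = 0) (t : ℝ) :
    HasDerivAt (fun s => ∫ x, (W (s,x))^2)
      (∫ x, 2 * W (t,x) * fderiv ℝ W (t,x) (1,0)) t := by
  set dW : ℝ × E2 → ℝ := fun p => fderiv ℝ W p (1, 0) with hdW
  have hdWc : Continuous dW :=
    (ContinuousLinearMap.apply ℝ ℝ ((1:ℝ),(0:E2))).continuous.comp (hW.continuous_fderiv (by simp))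
  have hder : ∀ s x, HasDerivAt (fun u => W (u,x)) (dW (s,x)) s := by
    intro s x
    have h1 : HasDerivAt (fun u : ℝ => (u, x)) ((1:ℝ), (0:E2)) s :=
      (hasDerivAt_id s).prodMk (hasDerivAt_const s x)
    exact ((hW.differentiable (by simp) (s,x)).hasFDerivAt).comp_hasDerivAt s h1
  set Bs := Metric.closedBall (0:E2) R' with hBs
  have hBsc : IsCompact Bs := isCompact_closedBall _ _
  obtain ⟨C, hC⟩ := ((isCompact_Icc (a := t-1) (b := t+1)).prod hBsc).exists_bound_of_continuousOn
    ((((continuous_const.mul hW.continuous).mul hdWc : Continuous fun p : ℝ × E2 => 2 * W p * dW p)).continuousOn)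
  set bound : E2 → ℝ := Bs.indicator (fun _ => max C 0) with hbound
  have hbd_int : Integrable bound := by
    rw [hbound, integrable_indicator_iff measurableSet_closedBall]
    exact integrableOn_const hBsc.measure_lt_top.ne
  have key := hasDerivAt_integral_of_dominated_loc_of_deriv_le (s := Metric.ball t 1) (Metric.ball_mem_nhds t one_pos)
    (F := fun s x => (W (s,x))^2) (F' := fun s x => 2 * W (s,x) * dW (s,x))
    (bound := bound) (μ := volume) (x₀ := t)
    (Filter.Eventually.of_forall (fun s =>
      ((hW.continuous.comp (continuous_const.prodMk continuous_id)).pow 2).aestronglyMeasurable))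
    (by
      apply Continuous.integrable_of_hasCompactSupport
      · exact (hW.continuous.comp (continuous_const.prodMk continuous_id)).pow 2
      · exact HasCompactSupport.intro hBsc (fun x hx => by simp [hsupp t x hx]))
    (((continuous_const.mul (hW.continuous.comp (continuous_const.prodMk continuous_id))).mul
      (hdWc.comp (continuous_const.prodMk continuous_id))).aestronglyMeasurable)
    (Filter.Eventually.of_forall (fun x s hs => by
      by_cases hx : x ∈ Bs
      · have hmem : (s, x) ∈ Set.Icc (t-1) (t+1) ×ˢ Bs := by
          constructor
          · rw [Metric.mem_ball, Real.dist_eq, abs_lt] at hs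
            constructor <;> [linarith [hs.1]; linarith [hs.2]]
          · exact hx
        have := hC (s,x) hmem
        rw [hbound, Set.indicator_of_mem hx]
        exact le_trans this (le_max_left C 0)
      · rw [hbound, Set.indicator_of_notMem hx]
        simp [hsupp s x hx]))
    hbd_int
    (Filter.Eventually.of_forall (fun x s _ => by
      have h := (hder s x).pow 2
      norm_num at h
      exact h))
  exact key.2

lemma continuous_integral_sq (H : ℝ × E2 → ℝ) (hH : Continuous H) (R' : ℝ)
    (hsupp : ∀ t x, x ∉ Metric.closedBall (0:E2) R' → H (t,x) = 0) :
    Continuous fun s => ∫ x, (H (s,x))^2 := by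
  rw [continuous_iff_continuousAt]
  intro t
  set Bs := Metric.closedBall (0:E2) R' with hBs
  have hBsc : IsCompact Bs := isCompact_closedBall _ _
  obtain ⟨C, hC⟩ := ((isCompact_Icc (a := t-1) (b := t+1)).prod hBsc).exists_bound_of_continuousOn
    ((hH.pow 2).continuousOn)
  set bound : E2 → ℝ := Bs.indicator (fun _ => max C 0) with hbound
  have hbd_int : Integrable bound := by
    rw [hbound, integrable_indicator_iff measurableSet_closedBall]
    exact integrableOn_const hBsc.measure_lt_top.ne
  apply MeasureTheory.continuousAt_of_dominated (bound := bound)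
  · exact Filter.Eventually.of_forall (fun s =>
      ((hH.comp (continuous_const.prodMk continuous_id)).pow 2).aestronglyMeasurable)
  · refine Filter.eventually_of_mem (Metric.ball_mem_nhds t one_pos) (fun s hs => ?_)
    refine Filter.Eventually.of_forall (fun x => ?_)
    by_cases hx : x ∈ Bs
    · have hmem : (s, x) ∈ Set.Icc (t-1) (t+1) ×ˢ Bs := by
        constructor
        · rw [Metric.mem_ball, Real.dist_eq, abs_lt] at hs
          constructor <;> [linarith [hs.1]; linarith [hs.2]]
        · exact hx
      have := hC (s,x) hmem
      rw [hbound, Set.indicator_of_mem hx]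
      exact le_trans this (le_max_left C 0)
    · rw [hbound, Set.indicator_of_notMem hx]
      simp [hsupp s x hx]
  · exact hbd_int
  · exact Filter.Eventually.of_forall (fun x =>
      ((hH.comp (continuous_id.prodMk continuous_const)).pow 2).continuousAt)
lemma scalar_ineq (q₀ B μ a g q c d0 d1 b0 b1 : ℝ) (hq₀ : 0 < q₀) (hμ : 0 < μ)
    (hB2 : B^2 ≤ μ*q₀) (hq : q₀ ≤ q) (hc : 0 ≤ c) (hb : b0^2+b1^2 ≤ B^2) :
    2*a*g - 2*μ*a^2 - 2*c*a^2 + 2*a*(d0*b0+d1*b1) - 2*q*(d0^2+d1^2)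
      ≤ -(μ/2)*a^2 + (1/μ)*g^2 := by
  rw [← mul_le_mul_iff_right₀ hμ]
  have hn : (0:ℝ) ≤ d0^2 + d1^2 := by positivity
  have hcs : (d0*b0+d1*b1)^2 ≤ (b0^2+b1^2)*(d0^2+d1^2) := by nlinarith [sq_nonneg (d0*b1 - d1*b0)]
  have h1 : (d0*b0+d1*b1)^2 ≤ μ*q₀*(d0^2+d1^2) := by nlinarith [mul_le_mul_of_nonneg_right hb hn, mul_le_mul_of_nonneg_right hB2 hn]
  have h2 : μ*(2*q*(d0^2+d1^2)) ≥ μ*(2*q₀*(d0^2+d1^2)) := by nlinarith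
  have h3 : μ*(2*c*a^2) ≥ 0 := by positivity
  have hre : μ * ((1/μ)*g^2) = g^2 := by field_simp
  nlinarith [sq_nonneg (μ*a - g), sq_nonneg (μ*a - 2*(d0*b0+d1*b1)), hre]
set_option maxHeartbeats 1000000 in
/-- Exponential decay, with forcing, of the L² norm of a classical solution `w`
of the parabolic equation `∂ₜw - ∇·(q̃∇w) + ∇·(b w) + c w + μ w = g` on `[0,T] × ℝ²`,
when `q̃ ≥ q₀ > 0`, `c ≥ 0`, `|b| ≤ B` and `μ ≥ B²/q₀`. -/
theorem parabolic_assimilation_decay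
    (q₀ B μ : ℝ) (hq₀ : 0 < q₀) (hB : 0 ≤ B) (hμ_pos : 0 < μ) (hμ : B ^ 2 / q₀ ≤ μ)
    (q c : EuclideanSpace ℝ (Fin 2) → ℝ)
    (b : EuclideanSpace ℝ (Fin 2) → EuclideanSpace ℝ (Fin 2))
    (hq : ContDiff ℝ (⊤ : ℕ∞) q) (hc : ContDiff ℝ (⊤ : ℕ∞) c) (hb : ContDiff ℝ (⊤ : ℕ∞) b)
    (hq_lb : ∀ x, q₀ ≤ q x) (hc_nonneg : ∀ x, 0 ≤ c x) (hb_bd : ∀ x, ‖b x‖ ≤ B)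
    (T : ℝ) (hT : 0 < T)
    (w : ℝ × EuclideanSpace ℝ (Fin 2) → ℝ) (hw : ContDiff ℝ (⊤ : ℕ∞) w)
    (K : Set (EuclideanSpace ℝ (Fin 2))) (hK : IsCompact K)
    (hsupp : ∀ t ∈ Set.Icc (0 : ℝ) T, ∀ x, x ∉ K → w (t, x) = 0)
    (g : ℝ × EuclideanSpace ℝ (Fin 2) → ℝ)
    (hg : ∀ t x, g (t, x) =
      deriv (fun s => w (s, x)) t
      - vdiv (fun y => q y • gradient (fun z => w (t, z)) y) x
      + vdiv (fun y => w (t, y) • b y) x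
      + c x * w (t, x) + μ * w (t, x)) :
    ∀ t ∈ Set.Icc (0 : ℝ) T,
      (∫ x, (w (t, x)) ^ 2) ≤
        Real.exp (-μ * t / 2) * (∫ x, (w (0, x)) ^ 2)
        + (1 / μ) * ∫ s in (0 : ℝ)..t, Real.exp (μ * (s - t) / 2) * (∫ x, (g (s, x)) ^ 2) := by
  -- cutoff function
  obtain ⟨R, hR0, hKR⟩ : ∃ R : ℝ, 0 < R ∧ K ⊆ Metric.closedBall 0 R := by
    obtain ⟨R, hR⟩ := hK.isBounded.subset_closedBall 0
    exact ⟨max R 1, lt_of_lt_of_le one_pos (le_max_right R 1),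
      hR.trans (Metric.closedBall_subset_closedBall (le_max_left R 1))⟩
  set bump : ContDiffBump (0 : E2) := ⟨R, R+1, hR0, by linarith⟩ with hbump
  set χ : E2 → ℝ := fun x => bump x with hχ
  have hχ1 : ∀ x ∈ K, χ x = 1 := fun x hx => bump.one_of_mem_closedBall (hKR hx)
  have hχsm : ContDiff ℝ ∞ χ := bump.contDiff
  have hχ0 : ∀ x : E2, x ∉ Metric.closedBall (0:E2) (R+1) → χ x = 0 := by
    intro x hx
    apply bump.zero_of_le_dist
    rw [Metric.mem_closedBall] at hx
    exact le_of_lt (lt_of_not_ge hx)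
  set W : ℝ × E2 → ℝ := fun p => χ p.2 * w p with hWdef
  have hw' : ContDiff ℝ ∞ w := hw.of_le (by simp)
  have hq' : ContDiff ℝ ∞ q := hq.of_le (by simp)
  have hc' : ContDiff ℝ ∞ c := hc.of_le (by simp)
  have hb' : ContDiff ℝ ∞ b := hb.of_le (by simp)
  have hWsm : ContDiff ℝ ∞ W := (hχsm.comp contDiff_snd).mul hw'
  have hWsupp : ∀ s x, x ∉ Metric.closedBall (0:E2) (R+1) → W (s,x) = 0 :=
    fun s x hx => by simp [hWdef, hχ0 x hx]
  have hWeq : ∀ s ∈ Set.Icc (0:ℝ) T, ∀ x, W (s,x) = w (s,x) := by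
    intro s hs x
    by_cases hx : x ∈ K
    · simp [hWdef, hχ1 x hx]
    · simp [hWdef, hsupp s hs x hx]
  -- time derivatives
  set dw : ℝ × E2 → ℝ := fun p => fderiv ℝ w p (1, 0) with hdwdef
  set dW : ℝ × E2 → ℝ := fun p => fderiv ℝ W p (1, 0) with hdWdef
  have hderw : ∀ (s : ℝ) (x : E2), HasDerivAt (fun u => w (u,x)) (dw (s,x)) s := by
    intro s x
    have h1 : HasDerivAt (fun u : ℝ => (u, x)) ((1:ℝ), (0:E2)) s :=
      (hasDerivAt_id s).prodMk (hasDerivAt_const s x)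
    exact ((hw'.differentiable (by simp) (s,x)).hasFDerivAt).comp_hasDerivAt s h1
  have hderW : ∀ (s : ℝ) (x : E2), HasDerivAt (fun u => W (u,x)) (dW (s,x)) s := by
    intro s x
    have h1 : HasDerivAt (fun u : ℝ => (u, x)) ((1:ℝ), (0:E2)) s :=
      (hasDerivAt_id s).prodMk (hasDerivAt_const s x)
    exact ((hWsm.differentiable (by simp) (s,x)).hasFDerivAt).comp_hasDerivAt s h1
  have hdWχ : ∀ s x, dW (s,x) = χ x * dw (s,x) := by
    intro s x
    have h1 : HasDerivAt (fun u => W (u,x)) (χ x * dw (s,x)) s := by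
      have := (hderw s x).const_mul (χ x)
      exact this
    exact (hderW s x).unique h1
  have hdw_deriv : ∀ s x, deriv (fun u => w (u,x)) s = dw (s,x) := fun s x => (hderw s x).deriv
  have hdw0 : ∀ s ∈ Set.Icc (0:ℝ) T, ∀ x ∉ K, dw (s,x) = 0 := by
    intro s hs x hx
    have hud := (uniqueDiffOn_Icc hT) s hs
    have h1 : HasDerivWithinAt (fun u => w (u,x)) (dw (s,x)) (Set.Icc 0 T) s :=
      (hderw s x).hasDerivWithinAt
    have h2 : HasDerivWithinAt (fun u => w (u,x)) 0 (Set.Icc 0 T) s := by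
      apply (hasDerivWithinAt_const s (Set.Icc (0:ℝ) T) (0:ℝ)).congr
      · intro u hu; exact hsupp u hu x hx
      · exact hsupp s hs x hx
    have e1 := h1.derivWithin hud
    have e2 := h2.derivWithin hud
    rw [← e1]; exact e2
  -- the error source in terms of W
  set g' : ℝ × E2 → ℝ := fun p => dW p
    - vdiv (fun y => q y • gradient (fun z => W (p.1, z)) y) p.2
    + vdiv (fun y => W (p.1, y) • b y) p.2
    + c p.2 * W p + μ * W p with hg'def
  have hdWc : Continuous dW :=
    (ContinuousLinearMap.apply ℝ ℝ ((1:ℝ),(0:E2))).continuous.comp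
      (hWsm.continuous_fderiv (by simp))
  have hV1sm : ContDiff ℝ ∞ (fun p : ℝ × E2 => q p.2 • gradient (fun z => W (p.1,z)) p.2) :=
    (hq'.comp contDiff_snd).smul (contDiff_parametric_gradient W hWsm)
  have hV2sm : ContDiff ℝ ∞ (fun p : ℝ × E2 => W p • b p.2) :=
    hWsm.smul (hb'.comp contDiff_snd)
  have hg'c : Continuous g' := by
    have hc1 : Continuous fun p : ℝ × E2 =>
        vdiv (fun y => q y • gradient (fun z => W (p.1, z)) y) p.2 :=
      continuous_parametric_vdiv _ hV1sm
    have hc2 : Continuous fun p : ℝ × E2 => vdiv (fun y => W (p.1, y) • b y) p.2 :=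
      continuous_parametric_vdiv _ hV2sm
    exact (((hdWc.sub hc1).add hc2).add
      ((hc'.continuous.comp continuous_snd).mul hWsm.continuous)).add
      (continuous_const.mul hWsm.continuous)
  have hg'supp : ∀ s x, x ∉ Metric.closedBall (0:E2) (R+1) → g' (s,x) = 0 := by
    intro s x hx
    have h1 : dW (s,x) = 0 := by
      have hev : W =ᶠ[nhds ((s,x) : ℝ × E2)] (fun _ => (0:ℝ)) := by
        have hop : IsOpen ((Set.univ : Set ℝ) ×ˢ (Metric.closedBall (0:E2) (R+1))ᶜ) :=
          isOpen_univ.prod Metric.isClosed_closedBall.isOpen_compl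
        refine Filter.eventuallyEq_of_mem (hop.mem_nhds ⟨trivial, hx⟩) ?_
        rintro ⟨u, y⟩ ⟨-, hy⟩
        exact hWsupp u y hy
      rw [hdWdef]
      simp only [hev.fderiv_eq, fderiv_const]
      simp
    have hWs0 : ∀ y ∉ Metric.closedBall (0:E2) (R+1), W (s,y) = 0 := fun y hy => hWsupp s y hy
    have h2 : vdiv (fun y => q y • gradient (fun z => W (s, z)) y) x = 0 := by
      apply vdiv_zero_of_locally_zero Metric.isClosed_closedBall.isOpen_compl hx
      intro y hy
      have hfd : fderiv ℝ (fun z => W (s,z)) y = 0 :=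
        fderiv_zero_off_compact (isCompact_closedBall _ _) hWs0 hy
      have hgr : gradient (fun z => W (s,z)) y = 0 := by
        show (InnerProductSpace.toDual ℝ E2).symm (fderiv ℝ (fun z => W (s,z)) y) = 0
        rw [hfd]; simp
      rw [hgr, smul_zero]
    have h3 : vdiv (fun y => W (s, y) • b y) x = 0 := by
      apply vdiv_zero_of_locally_zero Metric.isClosed_closedBall.isOpen_compl hx
      intro y hy
      rw [hWs0 y hy, zero_smul]
    rw [hg'def]
    simp only [h1, h2, h3, hWsupp s x hx]
    ring
  set EE : ℝ → ℝ := fun s => ∫ x, (W (s,x))^2 with hEEdef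
  set GG : ℝ → ℝ := fun s => ∫ x, (g' (s,x))^2 with hGGdef
  have hEEder : ∀ s, HasDerivAt EE (∫ x, 2 * W (s,x) * dW (s,x)) s := fun s =>
    hasDerivAt_integral_sq W hWsm (R+1) hWsupp s
  have hGGc : Continuous GG := continuous_integral_sq g' hg'c (R+1) hg'supp
  -- g' agrees with g on [0,T]
  have hg'g : ∀ s ∈ Set.Icc (0:ℝ) T, ∀ x, g' (s,x) = g (s,x) := by
    intro s hs x
    have hdd : dW (s,x) = deriv (fun u => w (u,x)) s := by
      rw [hdw_deriv s x, hdWχ s x]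
      by_cases hx : x ∈ K
      · rw [hχ1 x hx]; ring
      · rw [hdw0 s hs x hx]; ring
    rw [hg s x, hg'def]
    simp only [hdd, hWeq s hs]
  -- key differential inequality
  have hB2 : B^2 ≤ μ * q₀ := by
    rw [div_le_iff₀ hq₀] at hμ; linarith
  have hb2 : ∀ x : E2, (b x 0)^2 + (b x 1)^2 ≤ B^2 := by
    intro x
    have h1 : ‖b x‖^2 ≤ B^2 := pow_le_pow_left₀ (norm_nonneg _) (hb_bd x) 2
    have h2 : ‖b x‖^2 = (b x 0)^2 + (b x 1)^2 := by
      rw [EuclideanSpace.norm_eq, Real.sq_sqrt (by positivity)]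
      simp [Fin.sum_univ_two, sq_abs]
    linarith
  have hKey : ∀ u ∈ Set.Icc (0:ℝ) T,
      (∫ x, 2 * W (u,x) * dW (u,x)) ≤ -(μ/2) * EE u + (1/μ) * GG u := by
    intro u hu
    have hasm : ContDiff ℝ ∞ (fun y => w (u, y)) := hw'.comp (contDiff_const.prodMk contDiff_id)
    have hdiffa : ∀ x, DifferentiableAt ℝ (fun y => w (u,y)) x :=
      fun x => hasm.differentiable (by simp) x
    have ha0 : ∀ x ∉ K, w (u, x) = 0 := hsupp u hu
    have hgradsm : ContDiff ℝ ∞ (fun y => gradient (fun z => w (u,z)) y) :=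
      (contDiff_parametric_gradient w hw').comp (contDiff_const.prodMk contDiff_id)
    set V1 : E2 → E2 := fun y => q y • gradient (fun z => w (u,z)) y with hV1def
    set F1 : E2 → E2 := fun y => w (u,y) • V1 y with hF1def
    set F2 : E2 → E2 := fun y => (w (u,y) * w (u,y)) • b y with hF2def
    have hV1s : ContDiff ℝ ∞ V1 := hq'.smul hgradsm
    have hF1s : ContDiff ℝ ∞ F1 := hasm.smul hV1s
    have hF2s : ContDiff ℝ ∞ F2 := (hasm.mul hasm).smul hb'
    have hF1_0 : ∀ x ∉ K, F1 x = 0 := by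
      intro x hx; show w (u,x) • V1 x = 0; rw [ha0 x hx, zero_smul]
    have hF2_0 : ∀ x ∉ K, F2 x = 0 := by
      intro x hx; show (w (u,x) * w (u,x)) • b x = 0; rw [ha0 x hx]; simp
    have hI1 : ∫ x, vdiv F1 x = 0 := integral_vdiv_eq_zero F1 hF1s hK hF1_0
    have hI2 : ∫ x, vdiv F2 x = 0 := integral_vdiv_eq_zero F2 hF2s hK hF2_0
    set QQ : E2 → ℝ := fun x => 2*(w (u,x))*(g (u,x)) - 2*μ*(w (u,x))^2 - 2*(c x)*(w (u,x))^2
      + 2*(w (u,x))*((fderiv ℝ (fun y => w (u,y)) x (EuclideanSpace.single 0 1))*(b x 0)+(fderiv ℝ (fun y => w (u,y)) x (EuclideanSpace.single 1 1))*(b x 1))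
      - 2*(q x)*((fderiv ℝ (fun y => w (u,y)) x (EuclideanSpace.single 0 1))^2+(fderiv ℝ (fun y => w (u,y)) x (EuclideanSpace.single 1 1))^2) with hQQdef
    -- pointwise identity
    have hpoint : ∀ x, 2 * W (u,x) * dW (u,x) = QQ x + (2 * vdiv F1 x - 2 * vdiv F2 x) := by
      intro x
      have hA : 2 * W (u,x) * dW (u,x) = 2 * w (u,x) * dw (u,x) := by
        rw [hdWχ u x, hWeq u hu x]
        by_cases hx : x ∈ K
        · rw [hχ1 x hx]; ring
        · rw [ha0 x hx]; ring
      have hpde : dw (u,x) = g (u,x) + vdiv V1 x - vdiv (fun y => w (u, y) • b y) x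
          - c x * w (u,x) - μ * w (u,x) := by
        have h0 := hg u x
        rw [hdw_deriv u x, ← hV1def] at h0
        linarith
      have hv1c : ∀ i : Fin 2, V1 x i
          = q x * (fderiv ℝ (fun y => w (u,y)) x (EuclideanSpace.single i 1)) := by
        intro i
        show (q x • gradient (fun z => w (u,z)) x) i = _
        rw [PiLp.smul_apply, gradient_apply_coord (hdiffa x) i, smul_eq_mul]
      have hvd1 : vdiv F1 x = ((fderiv ℝ (fun y => w (u,y)) x (EuclideanSpace.single 0 1)) * (q x * (fderiv ℝ (fun y => w (u,y)) x (EuclideanSpace.single 0 1))) + (fderiv ℝ (fun y => w (u,y)) x (EuclideanSpace.single 1 1)) * (q x * (fderiv ℝ (fun y => w (u,y)) x (EuclideanSpace.single 1 1))))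
          + w (u,x) * vdiv V1 x := by
        rw [hF1def, vdiv_smul (hdiffa x) (hV1s.differentiable (by simp) x),
          Fin.sum_univ_two, hv1c 0, hv1c 1]
      have hvd2 : vdiv F2 x = ((w (u,x) * (fderiv ℝ (fun y => w (u,y)) x (EuclideanSpace.single 0 1)) + w (u,x) * (fderiv ℝ (fun y => w (u,y)) x (EuclideanSpace.single 0 1))) * (b x 0)
          + (w (u,x) * (fderiv ℝ (fun y => w (u,y)) x (EuclideanSpace.single 1 1)) + w (u,x) * (fderiv ℝ (fun y => w (u,y)) x (EuclideanSpace.single 1 1))) * (b x 1))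
          + (w (u,x) * w (u,x)) * vdiv b x := by
        rw [hF2def, vdiv_smul (α := fun y => w (u,y) * w (u,y)) ((hdiffa x).mul (hdiffa x)) (hb'.differentiable (by simp) x),
          Fin.sum_univ_two]
        have hm : fderiv ℝ (fun y => w (u,y) * w (u,y)) x = _ := ((hdiffa x).hasFDerivAt.mul (hdiffa x).hasFDerivAt).fderiv
        rw [hm]
        simp only [ContinuousLinearMap.add_apply, ContinuousLinearMap.smul_apply, smul_eq_mul]
      have hvdab : vdiv (fun y => w (u, y) • b y) x
          = ((fderiv ℝ (fun y => w (u,y)) x (EuclideanSpace.single 0 1)) * (b x 0) + (fderiv ℝ (fun y => w (u,y)) x (EuclideanSpace.single 1 1)) * (b x 1)) + w (u,x) * vdiv b x := by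
        rw [vdiv_smul (hdiffa x) (hb'.differentiable (by simp) x), Fin.sum_univ_two]
      rw [hA, hpde, hvd1, hvd2, hvdab, hQQdef]
      beta_reduce
      ring
    -- continuity and integrability
    have hDc : ∀ i : Fin 2, Continuous
        (fun x => fderiv ℝ (fun y => w (u,y)) x (EuclideanSpace.single i 1)) := fun i =>
      (ContinuousLinearMap.apply ℝ ℝ (EuclideanSpace.single i (1:ℝ))).continuous.comp
        (hasm.continuous_fderiv (by simp))
    have hD0K : ∀ x ∉ K, ∀ i : Fin 2,
        fderiv ℝ (fun y => w (u,y)) x (EuclideanSpace.single i 1) = 0 := by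
      intro x hx i
      rw [fderiv_zero_off_compact hK ha0 hx]
      simp
    have hgc : Continuous (fun x => g (u,x)) := by
      have he : (fun x => g (u,x)) = fun x => g' (u,x) := funext fun x => (hg'g u hu x).symm
      rw [he]; exact hg'c.comp (continuous_const.prodMk continuous_id)
    have hwuc : Continuous (fun x => w (u,x)) := hasm.continuous
    have hQQc : Continuous QQ := by
      rw [hQQdef]
      refine ((((continuous_const.mul hwuc).mul hgc).sub
        ((continuous_const.mul (hwuc.pow 2)))).sub
        ((continuous_const.mul hc'.continuous).mul (hwuc.pow 2))).add
        ?_ |>.sub ?_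
      · exact (continuous_const.mul hwuc).mul
          (((hDc 0).mul ((continuous_apply (0:Fin 2)).comp (Continuous.comp (PiLp.continuous_ofLp (p := 2) (β := fun _ : Fin 2 => ℝ)) hb'.continuous))).add
           ((hDc 1).mul ((continuous_apply (1:Fin 2)).comp (Continuous.comp (PiLp.continuous_ofLp (p := 2) (β := fun _ : Fin 2 => ℝ)) hb'.continuous))))
      · exact (continuous_const.mul hq'.continuous).mul (((hDc 0).pow 2).add ((hDc 1).pow 2))
    have hQQ0 : ∀ x ∉ K, QQ x = 0 := by
      intro x hx
      rw [hQQdef]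
      beta_reduce
      rw [ha0 x hx, hD0K x hx 0, hD0K x hx 1]
      ring
    have hQQint : Integrable QQ :=
      hQQc.integrable_of_hasCompactSupport (HasCompactSupport.intro hK hQQ0)
    have hvd1int : Integrable (vdiv F1) :=
      (continuous_vdiv hF1s).integrable_of_hasCompactSupport (HasCompactSupport.intro hK
        (fun x hx => vdiv_zero_of_locally_zero hK.isClosed.isOpen_compl hx
          (fun y hy => hF1_0 y hy)))
    have hvd2int : Integrable (vdiv F2) :=
      (continuous_vdiv hF2s).integrable_of_hasCompactSupport (HasCompactSupport.intro hK
        (fun x hx => vdiv_zero_of_locally_zero hK.isClosed.isOpen_compl hx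
          (fun y hy => hF2_0 y hy)))
    have hw2int : Integrable (fun x => (w (u,x))^2) :=
      (hwuc.pow 2).integrable_of_hasCompactSupport (HasCompactSupport.intro hK
        (fun x hx => by simp only [Pi.pow_apply]; rw [ha0 x hx]; ring))
    have hg2int : Integrable (fun x => (g (u,x))^2) :=
      (hgc.pow 2).integrable_of_hasCompactSupport
        (HasCompactSupport.intro (isCompact_closedBall (0:E2) (R+1))
        (fun x hx => by simp only [Pi.pow_apply]; rw [← hg'g u hu x, hg'supp u x hx]; ring))
    have hsub : Integrable (fun x => 2 * vdiv F1 x - 2 * vdiv F2 x) :=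
      (hvd1int.const_mul 2).sub (hvd2int.const_mul 2)
    have hsplit : (∫ x, 2 * W (u,x) * dW (u,x)) = ∫ x, QQ x := by
      rw [MeasureTheory.integral_congr_ae (Filter.Eventually.of_forall hpoint),
        MeasureTheory.integral_add hQQint hsub,
        MeasureTheory.integral_sub (hvd1int.const_mul 2) (hvd2int.const_mul 2),
        MeasureTheory.integral_const_mul, MeasureTheory.integral_const_mul, hI1, hI2]
      ring
    have hRint : Integrable (fun x => -(μ/2) * (w (u,x))^2 + (1/μ) * (g (u,x))^2) :=
      (hw2int.const_mul (-(μ/2))).add (hg2int.const_mul (1/μ))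
    have hmono : (∫ x, QQ x) ≤ ∫ x, (-(μ/2) * (w (u,x))^2 + (1/μ) * (g (u,x))^2) := by
      apply MeasureTheory.integral_mono hQQint hRint
      intro x
      rw [hQQdef]
      beta_reduce
      exact scalar_ineq q₀ B μ (w (u,x)) (g (u,x)) (q x) (c x) (fderiv ℝ (fun y => w (u,y)) x (EuclideanSpace.single 0 1)) (fderiv ℝ (fun y => w (u,y)) x (EuclideanSpace.single 1 1)) (b x 0) (b x 1)
        hq₀ hμ_pos hB2 (hq_lb x) (hc_nonneg x) (hb2 x)
    have hEEu : EE u = ∫ x, (w (u,x))^2 := by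
      simp only [hEEdef]
      exact MeasureTheory.integral_congr_ae (Filter.Eventually.of_forall
        (fun x => by simp only [hWeq u hu x]))
    have hGGu : GG u = ∫ x, (g (u,x))^2 := by
      simp only [hGGdef]
      exact MeasureTheory.integral_congr_ae (Filter.Eventually.of_forall
        (fun x => by simp only [hg'g u hu x]))
    rw [hsplit, hEEu, hGGu]
    calc (∫ x, QQ x) ≤ ∫ x, (-(μ/2) * (w (u,x))^2 + (1/μ) * (g (u,x))^2) := hmono
      _ = -(μ/2) * (∫ x, (w (u,x))^2) + (1/μ) * ∫ x, (g (u,x))^2 := by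
          rw [MeasureTheory.integral_add (hw2int.const_mul (-(μ/2))) (hg2int.const_mul (1/μ)),
            MeasureTheory.integral_const_mul, MeasureTheory.integral_const_mul]
  -- comparison function
  set Φ : ℝ → ℝ := fun v => Real.exp (μ*v/2) * EE v
    - (1/μ) * ∫ s in (0:ℝ)..v, Real.exp (μ*s/2) * GG s with hΦdef
  have hintc : Continuous fun s : ℝ => Real.exp (μ*s/2) * GG s :=
    (Real.continuous_exp.comp ((continuous_const.mul continuous_id).div_const 2)).mul hGGc
  have hexpder : ∀ v : ℝ, HasDerivAt (fun v : ℝ => Real.exp (μ*v/2))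
      (Real.exp (μ*v/2) * (μ/2)) v := by
    intro v
    have h0 : HasDerivAt (fun v : ℝ => μ*v/2) (μ/2) v :=
      (hasDerivAt_mul_const (μ/2)).congr_of_eventuallyEq
        (Filter.Eventually.of_forall fun y => by ring)
    exact (Real.hasDerivAt_exp (μ*v/2)).comp v h0
  have hFTC : ∀ v : ℝ, HasDerivAt (fun v => ∫ s in (0:ℝ)..v, Real.exp (μ*s/2) * GG s)
      (Real.exp (μ*v/2) * GG v) v := fun v =>
    intervalIntegral.integral_hasDerivAt_right (hintc.intervalIntegrable 0 v)
      (hintc.stronglyMeasurableAtFilter volume (nhds v)) hintc.continuousAt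
  have hΦder : ∀ v : ℝ, HasDerivAt Φ
      (Real.exp (μ*v/2) * (μ/2) * EE v + Real.exp (μ*v/2) * (∫ x, 2 * W (v,x) * dW (v,x))
        - (1/μ) * (Real.exp (μ*v/2) * GG v)) v := by
    intro v
    exact ((hexpder v).mul (hEEder v)).sub ((hFTC v).const_mul (1/μ))
  have hΦdiff : Differentiable ℝ Φ := fun v => (hΦder v).differentiableAt
  have hΦanti : AntitoneOn Φ (Set.Icc 0 T) := by
    apply antitoneOn_of_deriv_nonpos (convex_Icc 0 T) hΦdiff.continuous.continuousOn
      (fun v _ => (hΦdiff v).differentiableWithinAt)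
    intro v hv
    rw [interior_Icc] at hv
    rw [(hΦder v).deriv]
    have hKv := hKey v ⟨le_of_lt hv.1, le_of_lt hv.2⟩
    have hep := Real.exp_pos (μ*v/2)
    nlinarith [mul_le_mul_of_nonneg_left hKv (le_of_lt hep)]
  intro t ht
  have h0mem : (0:ℝ) ∈ Set.Icc (0:ℝ) T := ⟨le_refl 0, le_of_lt hT⟩
  have hΦle : Φ t ≤ Φ 0 := hΦanti h0mem ht ht.1
  have hΦ0 : Φ 0 = EE 0 := by
    simp only [hΦdef]
    rw [intervalIntegral.integral_same]
    norm_num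
  have hEE0 : EE 0 = ∫ x, (w (0,x))^2 := by
    simp only [hEEdef]
    exact MeasureTheory.integral_congr_ae (Filter.Eventually.of_forall
      (fun x => by simp only [hWeq 0 h0mem x]))
  have hEEt : EE t = ∫ x, (w (t,x))^2 := by
    simp only [hEEdef]
    exact MeasureTheory.integral_congr_ae (Filter.Eventually.of_forall
      (fun x => by simp only [hWeq t ht x]))
  have hiint : (∫ s in (0:ℝ)..t, Real.exp (μ * (s - t) / 2) * (∫ x, (g (s,x))^2))
      = Real.exp (-(μ*t)/2) * ∫ s in (0:ℝ)..t, Real.exp (μ*s/2) * GG s := by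
    rw [← intervalIntegral.integral_const_mul]
    apply intervalIntegral.integral_congr
    intro s hs
    rw [Set.uIcc_of_le ht.1] at hs
    beta_reduce
    have hs' : s ∈ Set.Icc (0:ℝ) T := ⟨hs.1, le_trans hs.2 ht.2⟩
    have hGs : (∫ x, (g (s,x))^2) = GG s := by
      simp only [hGGdef]
      exact MeasureTheory.integral_congr_ae (Filter.Eventually.of_forall
        (fun x => by simp only [hg'g s hs' x]))
    rw [hGs, ← mul_assoc, ← Real.exp_add,
      show -(μ*t)/2 + μ*s/2 = μ*(s-t)/2 from by ring]
  rw [← hEEt, ← hEE0, hiint]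
  have hΦt : Real.exp (μ*t/2) * EE t
      - (1/μ) * (∫ s in (0:ℝ)..t, Real.exp (μ*s/2) * GG s) ≤ EE 0 := by
    have h := hΦle
    rw [hΦ0] at h
    simpa [hΦdef] using h
  set I := ∫ s in (0:ℝ)..t, Real.exp (μ*s/2) * GG s with hIdef
  have hep : (0:ℝ) < Real.exp (μ*t/2) := Real.exp_pos _
  have hneg : Real.exp (-μ*t/2) = (Real.exp (μ*t/2))⁻¹ := by
    rw [← Real.exp_neg]; congr 1; ring
  have hneg2 : Real.exp (-(μ*t)/2) = (Real.exp (μ*t/2))⁻¹ := by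
    rw [← Real.exp_neg]; congr 1; ring
  rw [hneg, hneg2]
  have h2 : EE t ≤ (Real.exp (μ*t/2))⁻¹ * (EE 0 + (1/μ) * I) := by
    rw [inv_mul_eq_div, le_div_iff₀ hep]
    linarith [hΦt, mul_comm (EE t) (Real.exp (μ*t/2))]
  calc EE t ≤ (Real.exp (μ*t/2))⁻¹ * (EE 0 + (1/μ) * I) := h2
    _ = (Real.exp (μ*t/2))⁻¹ * EE 0 + (1/μ) * ((Real.exp (μ*t/2))⁻¹ * I) := by ring
end
end

section
/- Let q₀ > 0, B ≥ 0 and μ > 0 with μ ≥ B²/(2q₀). Let q̃ : ℝ² → ℝ, c : ℝ² → ℝ and b : ℝ² → ℝ² be C^∞ with q̃(x) ≥ q₀, c(x) ≥ 0 and |b(x)| ≤ B for all x ∈ ℝ². Let w : ℝ² → ℝ be C^∞ with compact support and define g(x) := −∇·(q̃(x)∇w(x)) + ∇·(b(x)·w(x)) + c(x)·w(x) + μ·w(x). Then (∫_{ℝ²} w² dx)^{1/2} ≤ (2/μ)·(∫_{ℝ²} g² dx)^{1/2}. -/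
noncomputable section
open MeasureTheory Real

local notation "E2" => EuclideanSpace ℝ (Fin 2)

abbrev ee (i : Fin 2) : EuclideanSpace ℝ (Fin 2) := EuclideanSpace.single i 1

lemma integ_left {f g : E2 → ℝ} (hf : Continuous f) (hg : Continuous g)
    (h : HasCompactSupport f) : Integrable (fun x => f x * g x) :=
  (hf.mul hg).integrable_of_hasCompactSupport h.mul_right

lemma integ_right {f g : E2 → ℝ} (hf : Continuous f) (hg : Continuous g)
    (h : HasCompactSupport g) : Integrable (fun x => f x * g x) :=
  (hf.mul hg).integrable_of_hasCompactSupport h.mul_left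

lemma contDeriv {w : E2 → ℝ} (hw : ContDiff ℝ (⊤ : ℕ∞) w) (v : E2) :
    Continuous fun x => fderiv ℝ w x v :=
  ((hw.fderiv_right (m := (⊤ : ℕ∞)) (by simp)).continuous).clm_apply continuous_const

lemma vdiv_cont {F : E2 → E2} (hF : ContDiff ℝ (⊤ : ℕ∞) F) : Continuous (vdiv F) := by
  unfold vdiv
  apply continuous_finset_sum
  intro i _
  exact (EuclideanSpace.proj (𝕜 := ℝ) i).continuous.comp
    (((hF.fderiv_right (m := (⊤ : ℕ∞)) (by simp)).continuous).clm_apply continuous_const)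

lemma vdiv_supp {F : E2 → E2} (h : HasCompactSupport F) : HasCompactSupport (vdiv F) := by
  have h' : HasCompactSupport (fderiv ℝ F) := h.fderiv (𝕜 := ℝ)
  have := h'.comp_left (g := fun L : E2 →L[ℝ] E2 => ∑ i : Fin 2, L (ee i) i) (by simp)
  exact this

lemma ibp (F : E2 → E2) (hF : ContDiff ℝ (⊤ : ℕ∞) F)
    (w : E2 → ℝ) (hw : ContDiff ℝ (⊤ : ℕ∞) w) (hwsupp : HasCompactSupport w) :
    ∫ x, w x * vdiv F x
      = - ∑ i : Fin 2, ∫ x, fderiv ℝ w x (ee i) * F x i := by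
  have hFi : ∀ i : Fin 2, ContDiff ℝ (⊤ : ℕ∞) fun x => F x i :=
    fun i => (EuclideanSpace.proj (𝕜 := ℝ) i).contDiff.comp hF
  have hfd : ∀ (i : Fin 2) (x : E2),
      fderiv ℝ (fun y => F y i) x (ee i) = fderiv ℝ F x (ee i) i := by
    intro i x
    have : fderiv ℝ (fun y => F y i) x
        = (EuclideanSpace.proj (𝕜 := ℝ) i).comp (fderiv ℝ F x) :=
      ((EuclideanSpace.proj (𝕜 := ℝ) i).hasFDerivAt.comp x
        (hF.differentiable (by simp) x).hasFDerivAt).fderiv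
    rw [this]; rfl
  calc ∫ x, w x * vdiv F x
      = ∫ x, ∑ i : Fin 2, w x * fderiv ℝ (fun y => F y i) x (ee i) := by
        apply integral_congr_ae; filter_upwards with x
        unfold vdiv
        rw [Finset.mul_sum]
        exact Finset.sum_congr rfl fun i _ => by rw [hfd]
    _ = ∑ i : Fin 2, ∫ x, w x * fderiv ℝ (fun y => F y i) x (ee i) := by
        apply integral_finset_sum
        intro i _
        exact integ_left hw.continuous (contDeriv (hFi i) (ee i)) hwsupp
    _ = ∑ i : Fin 2, - ∫ x, fderiv ℝ w x (ee i) * F x i := by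
        refine Finset.sum_congr rfl fun i _ => ?_
        rw [integral_mul_fderiv_eq_neg_fderiv_mul_of_integrable]
        · exact integ_left (contDeriv hw (ee i)) (hFi i).continuous (hwsupp.fderiv_apply (𝕜 := ℝ) (ee i))
        · exact integ_left hw.continuous (contDeriv (hFi i) (ee i)) hwsupp
        · exact integ_left hw.continuous (hFi i).continuous hwsupp
        · exact fun x _ => hw.differentiable (by simp) x
        · exact fun x _ => (hFi i).differentiable (by simp) x
    _ = - ∑ i : Fin 2, ∫ x, fderiv ℝ w x (ee i) * F x i := by
        rw [← Finset.sum_neg_distrib]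


/-- L² bound for the elliptic assimilation error: if
`-∇·(q̃∇w) + ∇·(b w) + c w + μ w = g` on ℝ² with `q̃ ≥ q₀ > 0`, `c ≥ 0`, `|b| ≤ B` and
`μ ≥ B²/(2q₀)`, then `‖w‖_{L²} ≤ (2/μ)‖g‖_{L²}`. -/
theorem elliptic_assimilation_L2_bound
    (q₀ B μ : ℝ) (hq₀ : 0 < q₀) (hB : 0 ≤ B) (hμ_pos : 0 < μ) (hμ : B ^ 2 / (2 * q₀) ≤ μ)
    (q c : EuclideanSpace ℝ (Fin 2) → ℝ)
    (b : EuclideanSpace ℝ (Fin 2) → EuclideanSpace ℝ (Fin 2))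
    (hq : ContDiff ℝ (⊤ : ℕ∞) q) (hc : ContDiff ℝ (⊤ : ℕ∞) c) (hb : ContDiff ℝ (⊤ : ℕ∞) b)
    (hq_lb : ∀ x, q₀ ≤ q x) (hc_nonneg : ∀ x, 0 ≤ c x) (hb_bd : ∀ x, ‖b x‖ ≤ B)
    (w : EuclideanSpace ℝ (Fin 2) → ℝ) (hw : ContDiff ℝ (⊤ : ℕ∞) w) (hwsupp : HasCompactSupport w)
    (g : EuclideanSpace ℝ (Fin 2) → ℝ)
    (hg : ∀ x, g x =
      - vdiv (fun y => q y • gradient w y) x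
      + vdiv (fun y => w y • b y) x
      + c x * w x + μ * w x) :
    Real.sqrt (∫ x, (w x) ^ 2) ≤ (2 / μ) * Real.sqrt (∫ x, (g x) ^ 2) := by
    classical
  have hgrad_cd : ContDiff ℝ (⊤ : ℕ∞) (gradient w) := by
    have hh : gradient w
        = fun y => (InnerProductSpace.toDual ℝ (EuclideanSpace ℝ (Fin 2))).symm
            (fderiv ℝ w y) := rfl
    rw [hh]
    exact ((InnerProductSpace.toDual ℝ (EuclideanSpace ℝ (Fin 2))).symm.contDiff).comp
      (hw.fderiv_right (m := (⊤ : ℕ∞)) (by simp))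
  have hgrad_supp : HasCompactSupport (gradient w) := by
    have h' : HasCompactSupport (fderiv ℝ w) := hwsupp.fderiv (𝕜 := ℝ)
    exact h'.comp_left
      (g := fun L => (InnerProductSpace.toDual ℝ (EuclideanSpace ℝ (Fin 2))).symm L) (by simp)
  set F1 : EuclideanSpace ℝ (Fin 2) → EuclideanSpace ℝ (Fin 2) :=
    fun y => q y • gradient w y with hF1def
  set F2 : EuclideanSpace ℝ (Fin 2) → EuclideanSpace ℝ (Fin 2) :=
    fun y => w y • b y with hF2def
  have hF1 : ContDiff ℝ (⊤ : ℕ∞) F1 := hq.smul hgrad_cd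
  have hF2 : ContDiff ℝ (⊤ : ℕ∞) F2 := hw.smul hb
  have hF1supp : HasCompactSupport F1 := hgrad_supp.smul_left (f := q)
  have hF2supp : HasCompactSupport F2 := hwsupp.smul_right
  have grad_apply : ∀ (x : EuclideanSpace ℝ (Fin 2)) (i : Fin 2),
      gradient w x i = fderiv ℝ w x (ee i) := by
    intro x i
    have h1 : (inner ℝ (gradient w x) (EuclideanSpace.single i (1:ℝ)) : ℝ)
        = fderiv ℝ w x (EuclideanSpace.single i 1) :=
      InnerProductSpace.toDual_symm_apply
    rw [EuclideanSpace.inner_single_right] at h1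
    simpa using h1
  have hS_cont : Continuous (fun x => ‖gradient w x‖ ^ 2) := (hgrad_cd.continuous.norm).pow 2
  have hS_supp : HasCompactSupport (fun x => ‖gradient w x‖ ^ 2) :=
    hgrad_supp.comp_left (g := fun v => ‖v‖ ^ 2) (by simp)
  have hT_cont : Continuous (fun x => (inner ℝ (gradient w x) (b x) : ℝ)) :=
    hgrad_cd.continuous.inner hb.continuous
  have hw2supp : HasCompactSupport (fun x => w x ^ 2) :=
    hwsupp.comp_left (g := fun t => t ^ 2) (by simp)
  -- pointwise sums
  have hsum1 : ∀ x, ∑ i : Fin 2, fderiv ℝ w x (ee i) * F1 x i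
      = q x * ‖gradient w x‖ ^ 2 := by
    intro x
    have hcoord : ∀ i : Fin 2, F1 x i = q x * gradient w x i := by
      intro i; simp [hF1def]
    have hinner : ∑ i : Fin 2, gradient w x i * gradient w x i = ‖gradient w x‖ ^ 2 := by
      rw [← real_inner_self_eq_norm_sq (gradient w x), PiLp.inner_apply]
      simp [RCLike.inner_apply]; ring
    calc ∑ i : Fin 2, fderiv ℝ w x (ee i) * F1 x i
        = q x * ∑ i : Fin 2, gradient w x i * gradient w x i := by
          rw [Finset.mul_sum]
          exact Finset.sum_congr rfl fun i _ => by rw [hcoord, ← grad_apply]; ring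
      _ = q x * ‖gradient w x‖ ^ 2 := by rw [hinner]
  have hsum2 : ∀ x, ∑ i : Fin 2, fderiv ℝ w x (ee i) * F2 x i
      = w x * (inner ℝ (gradient w x) (b x) : ℝ) := by
    intro x
    have hcoord : ∀ i : Fin 2, F2 x i = w x * b x i := by
      intro i; simp [hF2def]
    have hinner : (inner ℝ (gradient w x) (b x) : ℝ)
        = ∑ i : Fin 2, gradient w x i * b x i := by
      rw [PiLp.inner_apply]; simp [RCLike.inner_apply]; ring
    calc ∑ i : Fin 2, fderiv ℝ w x (ee i) * F2 x i
        = w x * ∑ i : Fin 2, gradient w x i * b x i := by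
          rw [Finset.mul_sum]
          exact Finset.sum_congr rfl fun i _ => by rw [hcoord, ← grad_apply]; ring
      _ = w x * (inner ℝ (gradient w x) (b x) : ℝ) := by rw [hinner]
  -- integrabilities
  have hFi1cont : ∀ i : Fin 2, Continuous fun x => F1 x i := fun i =>
    (EuclideanSpace.proj (𝕜 := ℝ) i).continuous.comp hF1.continuous
  have hFi2cont : ∀ i : Fin 2, Continuous fun x => F2 x i := fun i =>
    (EuclideanSpace.proj (𝕜 := ℝ) i).continuous.comp hF2.continuous
  have iA : Integrable (fun x => w x * vdiv F1 x) :=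
    integ_left hw.continuous (vdiv_cont hF1) hwsupp
  have iA' : Integrable (fun x => -(w x * vdiv F1 x)) := iA.neg
  have iB : Integrable (fun x => w x * vdiv F2 x) :=
    integ_left hw.continuous (vdiv_cont hF2) hwsupp
  have iAB : Integrable (fun x => -(w x * vdiv F1 x) + w x * vdiv F2 x) := iA'.add iB
  have iC : Integrable (fun x => c x * w x ^ 2 + μ * w x ^ 2) := by
    exact (integ_right hc.continuous (hw.continuous.pow 2) hw2supp).add
      (integ_right continuous_const (hw.continuous.pow 2) hw2supp)
  have iqS : Integrable (fun x => q x * ‖gradient w x‖ ^ 2) :=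
    integ_right hq.continuous hS_cont hS_supp
  have iwT : Integrable (fun x => w x * (inner ℝ (gradient w x) (b x) : ℝ)) :=
    integ_left hw.continuous hT_cont hwsupp
  have iST : Integrable (fun x =>
      q x * ‖gradient w x‖ ^ 2 - w x * (inner ℝ (gradient w x) (b x) : ℝ)) := iqS.sub iwT
  -- the two integrations by parts
  have h1 : ∫ x, w x * vdiv F1 x = - ∫ x, q x * ‖gradient w x‖ ^ 2 := by
    rw [ibp F1 hF1 w hw hwsupp]
    congr 1
    rw [← integral_finset_sum _ (fun i _ =>
      integ_left (contDeriv hw (ee i)) (hFi1cont i) (hwsupp.fderiv_apply (𝕜 := ℝ) (ee i)))]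
    exact integral_congr_ae (Filter.Eventually.of_forall hsum1)
  have h2 : ∫ x, w x * vdiv F2 x
      = - ∫ x, w x * (inner ℝ (gradient w x) (b x) : ℝ) := by
    rw [ibp F2 hF2 w hw hwsupp]
    congr 1
    rw [← integral_finset_sum _ (fun i _ =>
      integ_left (contDeriv hw (ee i)) (hFi2cont i) (hwsupp.fderiv_apply (𝕜 := ℝ) (ee i)))]
    exact integral_congr_ae (Filter.Eventually.of_forall hsum2)
  -- energy identity
  have hsplit : (fun x => w x * g x)
      = fun x => (-(w x * vdiv F1 x) + w x * vdiv F2 x) + (c x * w x ^ 2 + μ * w x ^ 2) := by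
    funext x; rw [hg x]; ring
  have heq : ∫ x, w x * g x
      = ∫ x, (q x * ‖gradient w x‖ ^ 2 - w x * (inner ℝ (gradient w x) (b x) : ℝ)
          + (c x * w x ^ 2 + μ * w x ^ 2)) := by
    rw [hsplit, integral_add iAB iC, integral_add iA' iB, integral_neg, h1, h2,
      integral_add iST iC, integral_sub iqS iwT]
    ring
  -- pointwise lower bound
  have hpoint : ∀ x, μ / 2 * w x ^ 2
      ≤ q x * ‖gradient w x‖ ^ 2 - w x * (inner ℝ (gradient w x) (b x) : ℝ)
          + (c x * w x ^ 2 + μ * w x ^ 2) := by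
    intro x
    have hT : |(inner ℝ (gradient w x) (b x) : ℝ)| ≤ ‖gradient w x‖ * B := by
      refine (abs_real_inner_le_norm _ _).trans ?_
      exact mul_le_mul_of_nonneg_left (hb_bd x) (norm_nonneg _)
    have h2' : w x * (inner ℝ (gradient w x) (b x) : ℝ)
        ≤ |w x| * (‖gradient w x‖ * B) := by
      calc w x * (inner ℝ (gradient w x) (b x) : ℝ)
          ≤ |w x * (inner ℝ (gradient w x) (b x) : ℝ)| := le_abs_self _
        _ = |w x| * |(inner ℝ (gradient w x) (b x) : ℝ)| := abs_mul _ _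
        _ ≤ |w x| * (‖gradient w x‖ * B) := mul_le_mul_of_nonneg_left hT (abs_nonneg _)
    have hB2 : B ^ 2 ≤ 2 * q₀ * μ := by
      rw [div_le_iff₀ (by positivity)] at hμ; linarith
    nlinarith [sq_nonneg (2 * q₀ * ‖gradient w x‖ - B * |w x|), sq_abs (w x),
      abs_nonneg (w x), norm_nonneg (gradient w x),
      mul_nonneg (sub_nonneg.2 (hq_lb x)) (sq_nonneg ‖gradient w x‖),
      mul_nonneg (hc_nonneg x) (sq_nonneg (w x)),
      mul_nonneg (sub_nonneg.2 hB2) (sq_nonneg (w x))]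
  have key : μ / 2 * ∫ x, w x ^ 2 ≤ ∫ x, w x * g x := by
    rw [heq, ← integral_const_mul]
    exact integral_mono (integ_right continuous_const (hw.continuous.pow 2) hw2supp)
      (iST.add iC) hpoint
  -- continuity and support of g
  have hgeq : g = fun x => -vdiv F1 x + vdiv F2 x + c x * w x + μ * w x := funext hg
  have hg_cont : Continuous g := by
    rw [hgeq]
    exact (((vdiv_cont hF1).neg.add (vdiv_cont hF2)).add
      (hc.continuous.mul hw.continuous)).add (continuous_const.mul hw.continuous)
  have hg_supp : HasCompactSupport g := by
    rw [hgeq]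
    exact HasCompactSupport.add (HasCompactSupport.add (HasCompactSupport.add
      (vdiv_supp hF1supp).neg (vdiv_supp hF2supp)) hwsupp.mul_left) hwsupp.mul_left
  -- Cauchy–Schwarz
  have hCS : ∫ x, w x * g x ≤ Real.sqrt (∫ x, w x ^ 2) * Real.sqrt (∫ x, g x ^ 2) := by
    have hconj : (2:ℝ).HolderConjugate 2 := Real.HolderConjugate.two_two
    have hwm : MemLp w (ENNReal.ofReal 2) volume :=
      hw.continuous.memLp_of_hasCompactSupport hwsupp
    have hgm : MemLp g (ENNReal.ofReal 2) volume :=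
      hg_cont.memLp_of_hasCompactSupport hg_supp
    have hHold := MeasureTheory.integral_mul_norm_le_Lp_mul_Lq hconj hwm hgm
    have e1 : ∫ x, ‖w x‖ ^ (2:ℝ) = ∫ x, w x ^ 2 := by
      apply integral_congr_ae; filter_upwards with x
      rw [Real.rpow_two, Real.norm_eq_abs, sq_abs]
    have e2 : ∫ x, ‖g x‖ ^ (2:ℝ) = ∫ x, g x ^ 2 := by
      apply integral_congr_ae; filter_upwards with x
      rw [Real.rpow_two, Real.norm_eq_abs, sq_abs]
    calc ∫ x, w x * g x ≤ ∫ x, ‖w x‖ * ‖g x‖ := by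
          refine integral_mono (integ_left hw.continuous hg_cont hwsupp) ?_ fun x => ?_
          · exact (hw.continuous.norm.mul hg_cont.norm).integrable_of_hasCompactSupport
              hwsupp.norm.mul_right
          · calc w x * g x ≤ |w x * g x| := le_abs_self _
              _ = ‖w x‖ * ‖g x‖ := by rw [abs_mul]; rfl
      _ ≤ (∫ x, ‖w x‖ ^ (2:ℝ)) ^ (1/2:ℝ) * (∫ x, ‖g x‖ ^ (2:ℝ)) ^ (1/2:ℝ) := hHold
      _ = Real.sqrt (∫ x, w x ^ 2) * Real.sqrt (∫ x, g x ^ 2) := by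
          rw [e1, e2, Real.sqrt_eq_rpow, Real.sqrt_eq_rpow]
  -- conclude
  set a := Real.sqrt (∫ x, w x ^ 2) with hadef
  set bb := Real.sqrt (∫ x, g x ^ 2) with hbbdef
  have ha : 0 ≤ a := Real.sqrt_nonneg _
  have hbb : 0 ≤ bb := Real.sqrt_nonneg _
  have haa : a ^ 2 = ∫ x, w x ^ 2 :=
    Real.sq_sqrt (integral_nonneg fun x => sq_nonneg _)
  have hfin : μ / 2 * a ^ 2 ≤ a * bb := by
    rw [haa]; exact key.trans hCS
  rcases eq_or_lt_of_le ha with h0 | h0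
  · rw [← h0]; positivity
  · rw [div_mul_eq_mul_div, le_div_iff₀ hμ_pos]
    nlinarith
end
end

section
/- Let Ω ⊆ ℝ² be a bounded open set and λ the Lebesgue measure. Let c > 0, β ≥ 0, K ≥ 0 and C_Ω > 0, and assume λ({x ∈ Ω : dist(x, Ωᶜ) ≤ ρ}) ≤ C_Ω·ρ for every ρ > 0. Let g : ℝ² → ℝ be measurable with g(x) ≥ c·dist(x, Ωᶜ)^β for almost every x ∈ Ω, and let φ : ℝ² → ℝ be measurable with |φ(x)| ≤ K for almost every x ∈ Ω and with φ²·g integrable on Ω. Then ∫_Ω φ² dλ ≤ (c^{−1} + K²·C_Ω)·(∫_Ω φ²·g dλ)^{1/(1+β)}. -/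
open MeasureTheory Real

/-- The key splitting estimate from the positivity condition: if
`g ≥ c · dist(·, Ωᶜ)^β` a.e. on a bounded open `Ω ⊆ ℝ²` whose boundary collars have measure
at most `C_Ω ρ`, and `|φ| ≤ K` a.e. on `Ω`, then
`∫_Ω φ² ≤ (c⁻¹ + K² C_Ω) (∫_Ω φ² g)^{1/(1+β)}`. -/
theorem sq_integral_le_of_positivity_condition
    (Ω : Set (EuclideanSpace ℝ (Fin 2))) (hΩ_open : IsOpen Ω)
    (hΩ_bdd : Bornology.IsBounded Ω)
    (c β K CΩ : ℝ) (hc : 0 < c) (hβ : 0 ≤ β) (hK : 0 ≤ K) (hCΩ : 0 < CΩ)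
    (hcollar : ∀ ρ : ℝ, 0 < ρ →
      volume {x | x ∈ Ω ∧ Metric.infDist x Ωᶜ ≤ ρ} ≤ ENNReal.ofReal (CΩ * ρ))
    (g φ : EuclideanSpace ℝ (Fin 2) → ℝ) (hg : Measurable g) (hφ : Measurable φ)
    (hg_lb : ∀ᵐ x ∂(volume.restrict Ω), c * Metric.infDist x Ωᶜ ^ β ≤ g x)
    (hφ_bd : ∀ᵐ x ∂(volume.restrict Ω), |φ x| ≤ K)
    (hint : IntegrableOn (fun x => (φ x) ^ 2 * g x) Ω volume) :
    (∫ x in Ω, (φ x) ^ 2) ≤ (c⁻¹ + K ^ 2 * CΩ) * (∫ x in Ω, (φ x) ^ 2 * g x) ^ (1 / (1 + β)) := by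
  have hΩmeas : MeasurableSet Ω := hΩ_open.measurableSet
  have hμΩ : volume Ω < ⊤ := hΩ_bdd.measure_lt_top
  have hd_cont : Continuous fun x : EuclideanSpace ℝ (Fin 2) => Metric.infDist x Ωᶜ :=
    Metric.continuous_infDist_pt _
  -- integrability of φ²
  have hφ2_int : IntegrableOn (fun x => (φ x) ^ 2) Ω volume := by
    refine Integrable.mono' (integrableOn_const hμΩ.ne : IntegrableOn (fun _ => K ^ 2) Ω volume)
      ((hφ.pow_const 2).aestronglyMeasurable) ?_
    filter_upwards [hφ_bd] with x hx
    have : |φ x| ^ 2 ≤ K ^ 2 := pow_le_pow_left₀ (abs_nonneg _) hx 2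
    simpa [abs_pow, sq_abs] using this
  set I : ℝ := ∫ x in Ω, (φ x) ^ 2 * g x with hI
  have hI0 : 0 ≤ I := by
    refine setIntegral_nonneg_ae hΩmeas ?_
    have : ∀ᵐ x ∂(volume.restrict Ω), 0 ≤ (φ x) ^ 2 * g x := by
      filter_upwards [hg_lb] with x hx
      have h0 : (0:ℝ) ≤ c * Metric.infDist x Ωᶜ ^ β :=
        mul_nonneg hc.le (Real.rpow_nonneg Metric.infDist_nonneg β)
      exact mul_nonneg (sq_nonneg _) (h0.trans hx)
    simpa using (ae_restrict_iff' hΩmeas).1 this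
  -- key splitting estimate
  have key : ∀ ρ : ℝ, 0 < ρ →
      (∫ x in Ω, (φ x) ^ 2) ≤ (c * ρ ^ β)⁻¹ * I + K ^ 2 * (CΩ * ρ) := by
    intro ρ hρ
    set A : Set (EuclideanSpace ℝ (Fin 2)) := Ω ∩ {x | ρ < Metric.infDist x Ωᶜ} with hA
    set B : Set (EuclideanSpace ℝ (Fin 2)) := Ω ∩ {x | Metric.infDist x Ωᶜ ≤ ρ} with hB
    have hAmeas : MeasurableSet A :=
      hΩmeas.inter (measurableSet_lt measurable_const hd_cont.measurable)
    have hBmeas : MeasurableSet B :=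
      hΩmeas.inter (measurableSet_le hd_cont.measurable measurable_const)
    have hunion : Ω = A ∪ B := by
      ext x
      simp only [hA, hB, Set.mem_union, Set.mem_inter_iff, Set.mem_setOf_eq]
      constructor
      · intro hx
        rcases lt_or_ge ρ (Metric.infDist x Ωᶜ) with h | h
        · exact Or.inl ⟨hx, h⟩
        · exact Or.inr ⟨hx, h⟩
      · rintro (⟨hx, _⟩ | ⟨hx, _⟩) <;> exact hx
    have hdisj : Disjoint A B := by
      rw [Set.disjoint_left]
      rintro x ⟨_, hx1⟩ ⟨_, hx2⟩
      simp only [Set.mem_setOf_eq] at hx1 hx2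
      exact absurd hx2 (not_le.2 hx1)
    have hAsub : A ⊆ Ω := Set.inter_subset_left
    have hBsub : B ⊆ Ω := Set.inter_subset_left
    have hcρβ : 0 < c * ρ ^ β := mul_pos hc (Real.rpow_pos_of_pos hρ β)
    -- bound on A
    have hAbound : (∫ x in A, (φ x) ^ 2) ≤ (c * ρ ^ β)⁻¹ * I := by
      have h1 : (∫ x in A, (φ x) ^ 2) ≤ ∫ x in A, (c * ρ ^ β)⁻¹ * ((φ x) ^ 2 * g x) := by
        refine integral_mono_ae (hφ2_int.mono_set hAsub)
          ((hint.mono_set hAsub).const_mul _) ?_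
        have hg_lbA : ∀ᵐ x ∂(volume.restrict A), c * Metric.infDist x Ωᶜ ^ β ≤ g x :=
          ae_restrict_of_ae_restrict_of_subset hAsub hg_lb
        have hmemA : ∀ᵐ x ∂(volume.restrict A), x ∈ A := ae_restrict_mem hAmeas
        filter_upwards [hg_lbA, hmemA] with x hx hxA
        have hd : ρ ≤ Metric.infDist x Ωᶜ := le_of_lt hxA.2
        have hρβ : ρ ^ β ≤ Metric.infDist x Ωᶜ ^ β :=
          Real.rpow_le_rpow hρ.le hd hβ
        have hgx : c * ρ ^ β ≤ g x :=
          le_trans (mul_le_mul_of_nonneg_left hρβ hc.le) hx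
        have h2 : (φ x) ^ 2 * (c * ρ ^ β) ≤ (φ x) ^ 2 * g x :=
          mul_le_mul_of_nonneg_left hgx (sq_nonneg _)
        calc (φ x) ^ 2 = (φ x) ^ 2 * (c * ρ ^ β) / (c * ρ ^ β) := by
                field_simp
            _ ≤ (φ x) ^ 2 * g x / (c * ρ ^ β) := by
                gcongr
            _ = (c * ρ ^ β)⁻¹ * ((φ x) ^ 2 * g x) := by ring
      have h2 : (∫ x in A, (c * ρ ^ β)⁻¹ * ((φ x) ^ 2 * g x)) =
          (c * ρ ^ β)⁻¹ * ∫ x in A, (φ x) ^ 2 * g x := integral_const_mul _ _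
      have h3 : (∫ x in A, (φ x) ^ 2 * g x) ≤ I := by
        refine setIntegral_mono_set hint ?_ (HasSubset.Subset.eventuallyLE hAsub)
        filter_upwards [hg_lb] with x hx
        have h0 : (0:ℝ) ≤ c * Metric.infDist x Ωᶜ ^ β :=
          mul_nonneg hc.le (Real.rpow_nonneg Metric.infDist_nonneg β)
        exact mul_nonneg (sq_nonneg _) (h0.trans hx)
      calc (∫ x in A, (φ x) ^ 2) ≤ (c * ρ ^ β)⁻¹ * ∫ x in A, (φ x) ^ 2 * g x := by
            rw [← h2]; exact h1
        _ ≤ (c * ρ ^ β)⁻¹ * I := by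
            exact mul_le_mul_of_nonneg_left h3 (inv_nonneg.2 hcρβ.le)
    -- bound on B
    have hBbound : (∫ x in B, (φ x) ^ 2) ≤ K ^ 2 * (CΩ * ρ) := by
      have hμB : volume B ≤ ENNReal.ofReal (CΩ * ρ) := by
        have : B = {x | x ∈ Ω ∧ Metric.infDist x Ωᶜ ≤ ρ} := by
          ext x; simp [hB, Set.mem_inter_iff]
        rw [this]; exact hcollar ρ hρ
      have hμBfin : volume B < ⊤ := lt_of_le_of_lt hμB ENNReal.ofReal_lt_top
      have h1 : (∫ x in B, (φ x) ^ 2) ≤ ∫ _ in B, K ^ 2 := by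
        refine integral_mono_ae (hφ2_int.mono_set hBsub)
          (integrableOn_const hμBfin.ne) ?_
        have := ae_restrict_of_ae_restrict_of_subset hBsub hφ_bd
        filter_upwards [this] with x hx
        have : |φ x| ^ 2 ≤ K ^ 2 := pow_le_pow_left₀ (abs_nonneg _) hx 2
        simpa [sq_abs] using this
      have h2 : (∫ _ in B, (K:ℝ) ^ 2) = (volume B).toReal * K ^ 2 := by
        rw [setIntegral_const]; rfl
      have h3 : (volume B).toReal ≤ CΩ * ρ :=
        ENNReal.toReal_le_of_le_ofReal (le_of_lt (mul_pos hCΩ hρ)) hμB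
      calc (∫ x in B, (φ x) ^ 2) ≤ (volume B).toReal * K ^ 2 := by rw [← h2]; exact h1
        _ ≤ (CΩ * ρ) * K ^ 2 := mul_le_mul_of_nonneg_right h3 (sq_nonneg _)
        _ = K ^ 2 * (CΩ * ρ) := by ring
    have hsplit : (∫ x in Ω, (φ x) ^ 2) = (∫ x in A, (φ x) ^ 2) + ∫ x in B, (φ x) ^ 2 := by
      rw [hunion] at hφ2_int ⊢
      exact setIntegral_union hdisj hBmeas (hφ2_int.mono_set Set.subset_union_left)
        (hφ2_int.mono_set Set.subset_union_right)
    rw [hsplit]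
    exact add_le_add hAbound hBbound
  -- conclude
  have h1β : (0:ℝ) < 1 + β := by linarith
  rcases eq_or_lt_of_le hI0 with hIz | hIp
  · -- I = 0
    rw [← hIz, Real.zero_rpow (by positivity : 1 / (1 + β) ≠ 0), mul_zero]
    refine le_of_forall_pos_le_add ?_
    intro ε hε
    rw [zero_add]
    have hden : (0:ℝ) < K ^ 2 * CΩ + 1 := by positivity
    have hρpos : 0 < ε / (K ^ 2 * CΩ + 1) := div_pos hε hden
    have := key _ hρpos
    rw [← hIz, mul_zero, zero_add] at this
    refine this.trans ?_
    rw [show K ^ 2 * (CΩ * (ε / (K ^ 2 * CΩ + 1))) = (K ^ 2 * CΩ) * (ε / (K ^ 2 * CΩ + 1)) by ring]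
    rw [div_eq_mul_inv, ← mul_assoc]
    calc K ^ 2 * CΩ * ε * (K ^ 2 * CΩ + 1)⁻¹ ≤ (K ^ 2 * CΩ + 1) * ε * (K ^ 2 * CΩ + 1)⁻¹ := by
          have : K ^ 2 * CΩ ≤ K ^ 2 * CΩ + 1 := by linarith
          exact mul_le_mul_of_nonneg_right (mul_le_mul_of_nonneg_right this hε.le)
            (inv_nonneg.2 hden.le)
      _ = ε := by field_simp
  · -- I > 0
    have hρpos : 0 < I ^ (1 / (1 + β)) := Real.rpow_pos_of_pos hIp _
    have hkey := key _ hρpos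
    refine hkey.trans (le_of_eq ?_)
    have hρβ : (I ^ (1 / (1 + β))) ^ β = I ^ (β / (1 + β)) := by
      rw [← Real.rpow_mul hI0]
      congr 1
      field_simp
    rw [hρβ]
    set a : ℝ := I ^ (β / (1 + β)) with ha
    set b : ℝ := I ^ (1 / (1 + β)) with hb
    have hab : a * b = I := by
      rw [ha, hb, ← Real.rpow_add hIp]
      rw [show β / (1 + β) + 1 / (1 + β) = 1 by rw [← add_div, add_comm]; exact div_self (ne_of_gt h1β)]
      exact Real.rpow_one I
    have hapos : 0 < a := Real.rpow_pos_of_pos hIp _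
    have hbpos : 0 < b := hρpos
    rw [← hab]
    field_simp
end
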